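/- arXiv:2507.14068 — 5 statements merged into one kernel-verified Lean document; each statement's English description precedes it below -/
import Mathlib

section
/- Let L be a finite G-lattice and let x, x', y, y' ∈ L be elements with x < y and x' < y'. Then ⌊x → y⌋ = ⌊x' → y'⌋ if and only if there exists g ∈ G such that g·x = x' and g·y = y'. -/
/-- A transfer system on a `G`-lattice `L`: a partial order refining `≤`,
closed under the `G`-action and under restriction. -/
structure TransferSystem (G L : Type*) [Group G] [Lattice L] [MulAction G L] : Type _ where
  rel : L → L → Prop
  refl : ∀ x, rel x x
  trans : ∀ {x y z}, rel x y → rel y z → rel x z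
  le_of_rel : ∀ {x y}, rel x y → x ≤ y
  smul_rel : ∀ (g : G) {x y}, rel x y → rel (g • x) (g • y)
  restrict : ∀ {x y x'}, rel x y → x' ≤ y → rel (x ⊓ x') x'

namespace TransferSystem

variable {G L : Type*} [Group G] [Lattice L] [MulAction G L]
  [CovariantClass G L (· • ·) (· ≤ ·)]

theorem ext' {S T : TransferSystem G L} (h : S.rel = T.rel) : S = T := by
  cases S; cases T; simpa using h

instance : PartialOrder (TransferSystem G L) where
  le S T := ∀ ⦃x y : L⦄, S.rel x y → T.rel x y
  le_refl S := fun _ _ h => h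
  le_trans S T U h1 h2 := fun _ _ h => h2 (h1 h)
  le_antisymm S T h1 h2 :=
    ext' (by funext x y; exact propext ⟨fun h => h1 h, fun h => h2 h⟩)

lemma smul_mono' (g : G) {x y : L} (h : x ≤ y) : g • x ≤ g • y :=
  CovariantClass.elim g h

/-- The intersection of a set of transfer systems. -/
def sInfTS (s : Set (TransferSystem G L)) : TransferSystem G L where
  rel x y := x ≤ y ∧ ∀ T ∈ s, T.rel x y
  refl x := ⟨le_refl x, fun T _ => T.refl x⟩
  trans h1 h2 := ⟨h1.1.trans h2.1, fun T hT => T.trans (h1.2 T hT) (h2.2 T hT)⟩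
  le_of_rel h := h.1
  smul_rel g _ _ h := ⟨smul_mono' g h.1, fun T hT => T.smul_rel g (h.2 T hT)⟩
  restrict h hle := ⟨inf_le_right, fun T hT => T.restrict (h.2 T hT) hle⟩

instance : InfSet (TransferSystem G L) := ⟨sInfTS⟩

theorem sInf_rel (s : Set (TransferSystem G L)) (x y : L) :
    (sInf s).rel x y ↔ x ≤ y ∧ ∀ T ∈ s, T.rel x y := Iff.rfl

/-- The lattice of transfer systems, ordered by refinement. -/
instance : CompleteLattice (TransferSystem G L) :=
  completeLatticeOfInf _ (fun s =>
    ⟨fun T hT _ _ h => h.2 T hT,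
     fun T hT _ _ h => ((sInf_rel s _ _).2 ⟨T.le_of_rel h, fun S hS => hT hS h⟩)⟩)

/-- `⌊x → y⌋`, the smallest transfer system containing the pair `(x, y)`. -/
def gen (x y : L) : TransferSystem G L := sInf {T : TransferSystem G L | T.rel x y}

end TransferSystem

/-!
If `a ≠ b` are related in `⌊x → y⌋`, then `(a, b)` lies componentwise below some translate
`(g • x, g • y)`: the pairs with this property, together with the diagonal, already form a transfer
system. So if `⌊x → y⌋ = ⌊x' → y'⌋`, then `x ≤ g • x'` and `x' ≤ k • x`, whence `x` lies below its
translate by `g * k`. Under a finite group an element lying below one of its translates is fixed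
by it, which forces `k • x = x'`; likewise `k • y = y'`.
-/

theorem smul_eq_of_le_smul_of_le_smul {G α : Type*} [Group G] [Finite G] [PartialOrder α]
    [MulAction G α] [CovariantClass G α HSMul.hSMul LE.le] {g k : G} {a b : α}
    (ha : a ≤ g • b) (hb : b ≤ k • a) : g • b = a := by
  have hfix : (g * k) • a = a :=
    smul_eq_of_le_smul (ha.trans (by rw [mul_smul]; exact smul_le_smul_left g hb))
  refine le_antisymm ?_ ha
  calc g • b ≤ g • k • a := smul_le_smul_left g hb
    _ = a := by rw [smul_smul, hfix]

namespace TransferSystem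

variable {G L : Type*} [Group G] [Lattice L] [MulAction G L]
  [CovariantClass G L HSMul.hSMul LE.le]

theorem rel_gen {x y : L} (h : x ≤ y) : (gen (G := G) x y).rel x y :=
  ⟨h, fun _ hT => hT⟩

theorem gen_le {x y : L} {T : TransferSystem G L} (h : T.rel x y) : gen x y ≤ T :=
  fun _ _ hab => hab.2 T h

theorem gen_smul_smul (g : G) {x y : L} (h : x ≤ y) :
    gen (G := G) (g • x) (g • y) = gen x y := by
  refine le_antisymm (gen_le ((gen x y).smul_rel g (rel_gen h))) (gen_le ?_)
  simpa using (gen (G := G) (g • x) (g • y)).smul_rel g⁻¹ (rel_gen (smul_le_smul_left g h))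

def belowTranslates (x y : L) : TransferSystem G L where
  rel a b := a ≤ b ∧ (a = b ∨ ∃ g : G, a ≤ g • x ∧ b ≤ g • y)
  refl a := ⟨le_rfl, .inl rfl⟩
  trans := by
    rintro a b c ⟨hab, rfl | ⟨g, hag, hbg⟩⟩ ⟨hbc, rfl | ⟨k, hbk, hck⟩⟩
    · exact ⟨hbc, .inl rfl⟩
    · exact ⟨hbc, .inr ⟨k, hbk, hck⟩⟩
    · exact ⟨hab, .inr ⟨g, hag, hbg⟩⟩
    · exact ⟨hab.trans hbc, .inr ⟨k, hab.trans hbk, hck⟩⟩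
  le_of_rel h := h.1
  smul_rel := by
    rintro g a b ⟨hab, rfl | ⟨k, hak, hbk⟩⟩
    · exact ⟨le_rfl, .inl rfl⟩
    · refine ⟨smul_le_smul_left g hab, .inr ⟨g * k, ?_, ?_⟩⟩ <;>
        rw [mul_smul] <;> exact smul_le_smul_left g ‹_›
  restrict := by
    rintro a b c ⟨-, rfl | ⟨g, hag, hbg⟩⟩ hcb
    · exact ⟨inf_le_right, .inl (inf_eq_right.2 hcb)⟩
    · exact ⟨inf_le_right, .inr ⟨g, inf_le_left.trans hag, hcb.trans hbg⟩⟩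

theorem exists_le_smul_of_rel_gen {x y a b : L} (hxy : x ≤ y) (h : (gen (G := G) x y).rel a b)
    (hab : a ≠ b) : ∃ g : G, a ≤ g • x ∧ b ≤ g • y := by
  have hrel := gen_le (T := belowTranslates x y) ⟨hxy, .inr ⟨1, by simp, by simp⟩⟩ h
  exact hrel.2.resolve_left hab

end TransferSystem

open TransferSystem

theorem gen_eq_gen_iff_exists_smul_general {G L : Type*} [Group G] [Finite G] [Lattice L]
    [MulAction G L] [CovariantClass G L (· • ·) (· ≤ ·)]
    (x x' y y' : L) (hxy : x < y) (hxy' : x' < y') :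
    TransferSystem.gen (G := G) x y = TransferSystem.gen (G := G) x' y' ↔
      ∃ g : G, g • x = x' ∧ g • y = y' := by
  constructor
  · intro h
    obtain ⟨g, hxg, hyg⟩ := exists_le_smul_of_rel_gen hxy'.le (h ▸ rel_gen hxy.le) hxy.ne
    obtain ⟨k, hxk, hyk⟩ :=
      exists_le_smul_of_rel_gen hxy.le (h.symm ▸ rel_gen hxy'.le) hxy'.ne
    exact ⟨k, smul_eq_of_le_smul_of_le_smul hxk hxg, smul_eq_of_le_smul_of_le_smul hyk hyg⟩
  · rintro ⟨g, rfl, rfl⟩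
    exact (gen_smul_smul g hxy.le).symm

/-- For a finite `G`-lattice and `x < y`, `x' < y'`, we have
`⌊x → y⌋ = ⌊x' → y'⌋` iff there is `g ∈ G` with `g • x = x'` and `g • y = y'`. -/
theorem gen_eq_gen_iff_exists_smul {G L : Type*} [Group G] [Finite G] [Lattice L] [Finite L]
    [MulAction G L] [CovariantClass G L (· • ·) (· ≤ ·)]
    (x x' y y' : L) (hxy : x < y) (hxy' : x' < y') :
    TransferSystem.gen (G := G) x y = TransferSystem.gen (G := G) x' y' ↔
      ∃ g : G, g • x = x' ∧ g • y = y' :=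
  gen_eq_gen_iff_exists_smul_general x x' y y' hxy hxy'
end

section
/- Let L be a finite G-lattice. Then the set of join-irreducible elements of Tr(L) is exactly {⌊x → y⌋ : x, y ∈ L, x < y}, and the assignment (x, y) ↦ ⌊x → y⌋ induces a bijection from the set of orbits of the diagonal G-action g·(x, y) = (g·x, g·y) on the set {(x, y) ∈ L × L : x < y} to the set of join-irreducible elements of Tr(L). In particular, the number of join-irreducible elements of Tr(L) equals the number of G-orbits of pairs (x, y) with x < y. -/
/-- The orbit equivalence relation for the diagonal `G`-action on the set of
nontrivial relations `{(x, y) : x < y}` in `L`. -/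
def pairOrbitSetoid (G L : Type*) [Group G] [Lattice L] [MulAction G L] :
    Setoid {p : L × L // p.1 < p.2} where
  r p q := ∃ g : G, g • p.1 = q.1
  iseqv := by
    refine ⟨fun p => ⟨1, one_smul _ _⟩, ?_, ?_⟩
    · rintro p q ⟨g, hg⟩
      exact ⟨g⁻¹, by rw [← hg, inv_smul_smul]⟩
    · rintro p q r ⟨g, hg⟩ ⟨g', hg'⟩
      exact ⟨g' * g, by rw [mul_smul, hg, hg']⟩

/-! Every transfer system is the join of the `⌊a → b⌋` over its arrows, so a join-irreducible one
is some `⌊x → y⌋`. Conversely, every nontrivial arrow of `⌊x → y⌋` lies componentwise below a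
translate of `(x, y)`. Since `g • x ≤ k • x` forces `g • x = k • x` in a finite lattice (an order
automorphism cannot map `Iic a` onto a proper subset of itself), deleting the orbit of `(x, y)` from
`⌊x → y⌋` leaves a transfer system. It is the largest one strictly below `⌊x → y⌋`, which makes
`⌊x → y⌋` join-irreducible and determines the orbit of `(x, y)`. -/

theorem OrderIso.apply_eq_of_apply_le {α : Type*} [PartialOrder α] [Finite α] (e : α ≃o α)
    {a : α} (h : e a ≤ a) : e a = a := by
  have hIic : Set.Iic (e a) = Set.Iic a :=
    Set.eq_of_subset_of_ncard_le (Set.Iic_subset_Iic.2 h)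
      (by rw [← e.image_Iic, Set.ncard_image_of_injective _ e.injective])
  exact h.antisymm (Set.Iic_subset_Iic.1 hIic.symm.subset)

theorem supIrred_of_forall_lt_le {α : Type*} [SemilatticeSup α] {a b : α} (hba : b < a)
    (h : ∀ c < a, c ≤ b) : SupIrred a := by
  refine ⟨fun hmin => hmin.not_lt hba, fun c d hcd => ?_⟩
  by_contra! hne
  have hc : c ≤ b := h c (lt_of_le_of_ne (hcd ▸ le_sup_left) hne.1)
  have hd : d ≤ b := h d (lt_of_le_of_ne (hcd ▸ le_sup_right) hne.2)
  exact hba.not_ge (hcd ▸ sup_le hc hd)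

theorem MulAction.mk_mem_orbit_iff {G α β : Type*} [Group G] [MulAction G α] [MulAction G β]
    {a x : α} {b y : β} : (a, b) ∈ orbit G (x, y) ↔ ∃ g : G, g • x = a ∧ g • y = b := by
  simp only [mem_orbit_iff, Prod.smul_mk, Prod.mk.injEq]

namespace TransferSystem

variable {G L : Type*} [Group G] [Lattice L] [MulAction G L]
  [CovariantClass G L (· • ·) (· ≤ ·)]

variable (L) in
def smulOrderIso (g : G) : L ≃o L where
  toEquiv := MulAction.toPerm g
  map_rel_iff' {a b} := ⟨fun h => by simpa using smul_mono' g⁻¹ h, smul_mono' g⟩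

theorem smul_eq_of_smul_le_smul [Finite L] {g k : G} {a : L} (h : g • a ≤ k • a) :
    g • a = k • a := by
  have hfix : (k⁻¹ * g) • a = a :=
    (smulOrderIso L (k⁻¹ * g)).apply_eq_of_apply_le
      (show (k⁻¹ * g) • a ≤ a by simpa [mul_smul] using smul_mono' k⁻¹ h)
  rwa [mul_smul, inv_smul_eq_iff] at hfix

theorem gen_rel_self {x y : L} (hxy : x ≤ y) : (gen (G := G) x y).rel x y :=
  (sInf_rel _ x y).2 ⟨hxy, fun _ hT => hT⟩

theorem gen_le_iff {x y : L} (hxy : x ≤ y) {T : TransferSystem G L} :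
    gen x y ≤ T ↔ T.rel x y :=
  ⟨fun h => h (gen_rel_self hxy), fun h => sInf_le h⟩

theorem gen_self (a : L) : gen (G := G) a a = ⊥ :=
  eq_bot_iff.2 ((gen_le_iff le_rfl).2 ((⊥ : TransferSystem G L).refl a))

theorem sup_gen_eq_self [Finite L] (T : TransferSystem G L) :
    (Set.toFinite {p : L × L | T.rel p.1 p.2}).toFinset.sup (fun p => gen p.1 p.2) = T := by
  apply le_antisymm
  · refine Finset.sup_le fun p hp => ?_
    have hp : T.rel p.1 p.2 := by simpa using hp
    exact (gen_le_iff (T.le_of_rel hp)).2 hp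
  · intro a b hab
    have hle := Finset.le_sup (f := fun p : L × L => gen (G := G) p.1 p.2)
      (s := (Set.toFinite {p : L × L | T.rel p.1 p.2}).toFinset) (b := (a, b)) (by simpa using hab)
    exact hle (gen_rel_self (T.le_of_rel hab))

theorem exists_eq_gen_of_supIrred [Finite L] {T : TransferSystem G L} (hT : SupIrred T) :
    ∃ x y : L, x < y ∧ T = gen x y := by
  obtain ⟨⟨x, y⟩, hp, hgen⟩ := hT.finset_sup_eq (sup_gen_eq_self T)
  have hrel : T.rel x y := by simpa using hp
  refine ⟨x, y, lt_of_le_of_ne (T.le_of_rel hrel) ?_, hgen.symm⟩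
  rintro rfl
  exact hT.ne_bot (hgen.symm.trans (gen_self x))

def belowOrbit (x y : L) : TransferSystem G L where
  rel a b := a = b ∨ a ≤ b ∧ ∃ k : G, a ≤ k • x ∧ b ≤ k • y
  refl _ := Or.inl rfl
  trans {a b c} hab := by
    rintro (rfl | ⟨hbc, k, hbk, hck⟩)
    · exact hab
    rcases hab with rfl | ⟨hab, -⟩
    · exact Or.inr ⟨hbc, k, hbk, hck⟩
    · exact Or.inr ⟨hab.trans hbc, k, hab.trans hbk, hck⟩
  le_of_rel := by
    rintro a b (rfl | ⟨hab, -⟩)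
    exacts [le_rfl, hab]
  smul_rel g := by
    rintro a b (rfl | ⟨hab, k, hak, hbk⟩)
    · exact Or.inl rfl
    · refine Or.inr ⟨smul_mono' g hab, g * k, ?_, ?_⟩
      · rw [mul_smul]; exact smul_mono' g hak
      · rw [mul_smul]; exact smul_mono' g hbk
  restrict {a b a'} := by
    rintro (rfl | ⟨-, k, hak, hbk⟩) hle
    · exact Or.inl (inf_eq_right.2 hle)
    · exact Or.inr ⟨inf_le_right, k, inf_le_left.trans hak, hle.trans hbk⟩

theorem exists_le_smul_of_gen_rel {x y a b : L} (hxy : x ≤ y) (h : (gen (G := G) x y).rel a b)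
    (hab : a ≠ b) : ∃ k : G, a ≤ k • x ∧ b ≤ k • y := by
  have hbelow : gen x y ≤ belowOrbit (G := G) x y := (gen_le_iff hxy).2 (Or.inr ⟨hxy, 1, by simp⟩)
  exact ((hbelow h).resolve_left hab).2

def genDiffOrbit [Finite L] {x y : L} (hxy : x < y) : TransferSystem G L where
  rel a b := (gen (G := G) x y).rel a b ∧ (a, b) ∉ MulAction.orbit G (x, y)
  refl a := by
    refine ⟨(gen x y).refl a, ?_⟩
    rw [MulAction.mk_mem_orbit_iff]
    rintro ⟨g, hgx, hgy⟩
    exact hxy.ne (smul_left_cancel g (hgx.trans hgy.symm))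
  trans {a b c} hab hbc := by
    refine ⟨(gen x y).trans hab.1 hbc.1, ?_⟩
    rw [MulAction.mk_mem_orbit_iff]
    rintro ⟨g, rfl, rfl⟩
    by_cases hb : b = g • y
    · exact hab.2 (hb ▸ MulAction.mem_orbit _ g)
    obtain ⟨k, hbk, -⟩ := exists_le_smul_of_gen_rel hxy.le hbc.1 hb
    have hgb : g • x ≤ b := (gen x y).le_of_rel hab.1
    have hb' : b = g • x := (hbk.trans (smul_eq_of_smul_le_smul (hgb.trans hbk)).ge).antisymm hgb
    exact hbc.2 (hb' ▸ MulAction.mem_orbit _ g)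
  le_of_rel h := (gen x y).le_of_rel h.1
  smul_rel g {a b} h := by
    refine ⟨(gen x y).smul_rel g h.1, fun hmem => h.2 ?_⟩
    rw [← Prod.smul_mk, ← MulAction.orbit_eq_iff, MulAction.orbit_smul] at hmem
    exact MulAction.orbit_eq_iff.1 hmem
  restrict {a b a'} h hle := by
    refine ⟨(gen x y).restrict h.1 hle, ?_⟩
    rw [MulAction.mk_mem_orbit_iff]
    rintro ⟨g, hgx, rfl⟩
    by_cases hab : a = b
    · subst hab
      exact hxy.ne (smul_left_cancel g (hgx.trans (inf_eq_right.2 hle)))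
    obtain ⟨k, -, hbk⟩ := exists_le_smul_of_gen_rel hxy.le h.1 hab
    have hb : b = g • y := (hbk.trans (smul_eq_of_smul_le_smul (hle.trans hbk)).ge).antisymm hle
    have ha : a = g • x := by rw [hgx, inf_eq_left.2 (hb ▸ (gen x y).le_of_rel h.1)]
    exact h.2 (MulAction.mk_mem_orbit_iff.2 ⟨g, ha.symm, hb.symm⟩)

theorem genDiffOrbit_lt_gen [Finite L] {x y : L} (hxy : x < y) :
    genDiffOrbit (G := G) hxy < gen x y :=
  lt_of_le_not_ge (fun _ _ h => h.1) fun h =>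
    (h (gen_rel_self hxy.le)).2 (MulAction.mem_orbit_self _)

theorem le_genDiffOrbit_of_lt_gen [Finite L] {x y : L} (hxy : x < y) {T : TransferSystem G L}
    (hT : T < gen x y) : T ≤ genDiffOrbit hxy := by
  intro a b h
  refine ⟨hT.le h, ?_⟩
  rw [MulAction.mk_mem_orbit_iff]
  rintro ⟨g, rfl, rfl⟩
  exact hT.not_ge ((gen_le_iff hxy.le).2 (by simpa using T.smul_rel g⁻¹ h))

theorem supIrred_gen [Finite L] {x y : L} (hxy : x < y) : SupIrred (gen (G := G) x y) :=
  supIrred_of_forall_lt_le (genDiffOrbit_lt_gen hxy) fun _ => le_genDiffOrbit_of_lt_gen hxy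

theorem gen_smul (g : G) {x y : L} (hxy : x ≤ y) : gen (G := G) (g • x) (g • y) = gen x y :=
  le_antisymm ((gen_le_iff (smul_mono' g hxy)).2 ((gen x y).smul_rel g (gen_rel_self hxy)))
    ((gen_le_iff hxy).2
      (by simpa using (gen (g • x) (g • y)).smul_rel g⁻¹ (gen_rel_self (smul_mono' g hxy))))

theorem gen_eq_gen_iff [Finite L] {x y x' y' : L} (hxy : x < y) (hxy' : x' < y') :
    gen (G := G) x y = gen x' y' ↔ (x', y') ∈ MulAction.orbit G (x, y) := by
  refine ⟨fun h => ?_, ?_⟩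
  · by_contra hmem
    have hle : gen x' y' ≤ genDiffOrbit (G := G) hxy :=
      (gen_le_iff hxy'.le).2 ⟨h ▸ gen_rel_self hxy'.le, hmem⟩
    exact (hle.trans_lt (genDiffOrbit_lt_gen hxy)).ne h.symm
  · rw [MulAction.mk_mem_orbit_iff]
    rintro ⟨g, rfl, rfl⟩
    exact (gen_smul g hxy.le).symm

end TransferSystem

theorem supIrred_characterization_general {G L : Type*} [Group G] [Lattice L] [Finite L]
    [MulAction G L] [CovariantClass G L (· • ·) (· ≤ ·)] :
    ({T : TransferSystem G L | SupIrred T} =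
        {T : TransferSystem G L | ∃ x y : L, x < y ∧ T = TransferSystem.gen x y}) ∧
    (∀ p q : {p : L × L // p.1 < p.2},
        TransferSystem.gen (G := G) p.1.1 p.1.2 = TransferSystem.gen (G := G) q.1.1 q.1.2 ↔
          ∃ g : G, g • p.1 = q.1) ∧
    Nat.card {T : TransferSystem G L // SupIrred T} =
      Nat.card (Quotient (pairOrbitSetoid G L)) := by
  have hgen_eq (p q : {p : L × L // p.1 < p.2}) :
      TransferSystem.gen (G := G) p.1.1 p.1.2 = TransferSystem.gen q.1.1 q.1.2 ↔
        ∃ g : G, g • p.1 = q.1 :=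
    (TransferSystem.gen_eq_gen_iff p.2 q.2).trans MulAction.mem_orbit_iff
  refine ⟨Set.ext fun T => ⟨TransferSystem.exists_eq_gen_of_supIrred, ?_⟩, hgen_eq, ?_⟩
  · rintro ⟨x, y, hxy, rfl⟩
    exact TransferSystem.supIrred_gen hxy
  let f (p : {p : L × L // p.1 < p.2}) : {T : TransferSystem G L // SupIrred T} :=
    ⟨TransferSystem.gen p.1.1 p.1.2, TransferSystem.supIrred_gen p.2⟩
  have hf : Function.Surjective f := by
    rintro ⟨T, hT⟩
    obtain ⟨x, y, hxy, rfl⟩ := TransferSystem.exists_eq_gen_of_supIrred hT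
    exact ⟨⟨(x, y), hxy⟩, rfl⟩
  have hker : pairOrbitSetoid G L = Setoid.ker f :=
    Setoid.ext fun p q => (hgen_eq p q).symm.trans (Subtype.ext_iff (a1 := f p) (a2 := f q)).symm
  rw [hker]
  exact Nat.card_congr (Setoid.quotientKerEquivOfSurjective f hf).symm

/-- The join-irreducible elements of `Tr(L)` are exactly the `⌊x → y⌋`
with `x < y`; the assignment `(x, y) ↦ ⌊x → y⌋` induces a bijection from the `G`-orbits
of pairs `x < y` to the join-irreducibles; in particular the number of join-irreducibles
equals the number of `G`-orbits of such pairs. -/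
theorem supIrred_characterization {G L : Type*} [Group G] [Finite G] [Lattice L] [Finite L]
    [MulAction G L] [CovariantClass G L (· • ·) (· ≤ ·)] :
    ({T : TransferSystem G L | SupIrred T} =
        {T : TransferSystem G L | ∃ x y : L, x < y ∧ T = TransferSystem.gen x y}) ∧
    (∀ p q : {p : L × L // p.1 < p.2},
        TransferSystem.gen (G := G) p.1.1 p.1.2 = TransferSystem.gen (G := G) q.1.1 q.1.2 ↔
          ∃ g : G, g • p.1 = q.1) ∧
    Nat.card {T : TransferSystem G L // SupIrred T} =
      Nat.card (Quotient (pairOrbitSetoid G L)) :=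
  supIrred_characterization_general
end

section
/- Let L be a finite G-lattice. For every cotransfer system C on L, the set C^⊠ is a transfer system on L, and the map C ↦ C^⊠ is an order-reversing bijection from the lattice coTr(L) of cotransfer systems on L to the lattice Tr(L) of transfer systems on L (i.e., a poset isomorphism coTr(L) ≅ Tr(L)^op). -/
/-- A cotransfer system on a `G`-lattice `L`: a partial order refining `≤`,
closed under the `G`-action and under corestriction. -/
structure CoTransferSystem (G L : Type*) [Group G] [Lattice L] [MulAction G L] : Type _ where
  rel : L → L → Prop
  refl : ∀ x, rel x x
  trans : ∀ {x y z}, rel x y → rel y z → rel x z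
  le_of_rel : ∀ {x y}, rel x y → x ≤ y
  smul_rel : ∀ (g : G) {x y}, rel x y → rel (g • x) (g • y)
  corestrict : ∀ {x y y'}, rel x y → x ≤ y' → rel y' (y ⊔ y')

namespace CoTransferSystem

variable {G L : Type*} [Group G] [Lattice L] [MulAction G L]
  [CovariantClass G L (· • ·) (· ≤ ·)]

theorem ext' {S T : CoTransferSystem G L} (h : S.rel = T.rel) : S = T := by
  cases S; cases T; simpa using h

/-- Cotransfer systems are ordered by refinement. -/
instance : PartialOrder (CoTransferSystem G L) where
  le S T := ∀ ⦃x y : L⦄, S.rel x y → T.rel x y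
  le_refl S := fun _ _ h => h
  le_trans S T U h1 h2 := fun _ _ h => h2 (h1 h)
  le_antisymm S T h1 h2 :=
    ext' (by funext x y; exact propext ⟨fun h => h1 h, fun h => h2 h⟩)

/-- `⌈x → y⌉`, the smallest cotransfer system containing the pair `(x, y)`. -/
def gen (x y : L) : CoTransferSystem G L where
  rel a b := a ≤ b ∧ ∀ C : CoTransferSystem G L, C.rel x y → C.rel a b
  refl a := ⟨le_refl a, fun C _ => C.refl a⟩
  trans h1 h2 := ⟨h1.1.trans h2.1, fun C hC => C.trans (h1.2 C hC) (h2.2 C hC)⟩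
  le_of_rel h := h.1
  smul_rel g _ _ h :=
    ⟨TransferSystem.smul_mono' g h.1, fun C hC => C.smul_rel g (h.2 C hC)⟩
  corestrict h hle := ⟨le_sup_right, fun C hC => C.corestrict (h.2 C hC) hle⟩

end CoTransferSystem

/-- `C^⊠`: the pairs `(a, b)` with `a ≤ b` having the right lifting property with respect
to every pair of `C`. -/
def rlpRel {G L : Type*} [Group G] [Lattice L] [MulAction G L]
    (C : CoTransferSystem G L) : L → L → Prop :=
  fun a b => a ≤ b ∧ ∀ ⦃x y : L⦄, C.rel x y → x ≤ a → y ≤ b → y ≤ a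

section SMul

variable {G L : Type*} [Group G] [Preorder L] [MulAction G L]
  [CovariantClass G L (· • ·) (· ≤ ·)]

theorem inv_smul_le_iff_le_smul (g : G) {a b : L} : g⁻¹ • a ≤ b ↔ a ≤ g • b :=
  ⟨fun h => by simpa using smul_le_smul_left g h, fun h => by simpa using smul_le_smul_left g⁻¹ h⟩

theorem smul_le_iff_le_inv_smul (g : G) {a b : L} : g • a ≤ b ↔ a ≤ g⁻¹ • b := by
  simpa using inv_smul_le_iff_le_smul g⁻¹ (a := a) (b := b)

end SMul

section Lifting

variable {G L : Type*} [Group G] [Lattice L] [MulAction G L]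
  [CovariantClass G L (· • ·) (· ≤ ·)]

namespace CoTransferSystem

def rlp (C : CoTransferSystem G L) : TransferSystem G L where
  rel := rlpRel C
  refl _ := ⟨le_rfl, fun _ _ _ _ hya => hya⟩
  trans hab hbc :=
    ⟨hab.1.trans hbc.1, fun _ _ hxy hxa hyc => hab.2 hxy hxa (hbc.2 hxy (hxa.trans hab.1) hyc)⟩
  le_of_rel h := h.1
  smul_rel g _ _ h := ⟨smul_le_smul_left g h.1, fun x y hxy hxa hyb => by
    rw [← inv_smul_le_iff_le_smul] at hxa hyb ⊢
    exact h.2 (C.smul_rel g⁻¹ hxy) hxa hyb⟩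
  restrict h hle := ⟨inf_le_right, fun _ _ hxy hx hy =>
    le_inf (h.2 hxy (hx.trans inf_le_left) (hy.trans hle)) hy⟩

theorem rlp_antitone : Antitone (rlp : CoTransferSystem G L → TransferSystem G L) :=
  fun _ _ hCD _ _ h => ⟨h.1, fun _ _ hxy => h.2 (hCD hxy)⟩

end CoTransferSystem

namespace TransferSystem

def llp (T : TransferSystem G L) : CoTransferSystem G L where
  rel x y := x ≤ y ∧ ∀ ⦃a b : L⦄, T.rel a b → x ≤ a → y ≤ b → y ≤ a
  refl _ := ⟨le_rfl, fun _ _ _ hxa _ => hxa⟩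
  trans hxy hyz :=
    ⟨hxy.1.trans hyz.1, fun _ _ hab hxa hzb => hyz.2 hab (hxy.2 hab hxa (hyz.1.trans hzb)) hzb⟩
  le_of_rel h := h.1
  smul_rel g _ _ h := ⟨smul_le_smul_left g h.1, fun a b hab hxa hyb => by
    rw [smul_le_iff_le_inv_smul] at hxa hyb ⊢
    exact h.2 (T.smul_rel g⁻¹ hab) hxa hyb⟩
  corestrict h hle := ⟨le_sup_right, fun _ _ hab hy'a hb =>
    sup_le (h.2 hab (hle.trans hy'a) (le_sup_left.trans hb)) hy'a⟩

theorem llp_antitone : Antitone (llp : TransferSystem G L → CoTransferSystem G L) :=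
  fun _ _ hST _ _ h => ⟨h.1, fun _ _ hab => h.2 (hST hab)⟩

end TransferSystem

theorem TransferSystem.rlp_llp [WellFoundedLT L] (T : TransferSystem G L) : T.llp.rlp = T := by
  refine le_antisymm (fun a b h => ?_) fun a b h =>
    ⟨T.le_of_rel h, fun _ _ hxy hxa hyb => hxy.2 h hxa hyb⟩
  obtain ⟨z, hz⟩ :=
    exists_minimal_of_wellFoundedLT (fun w => a ≤ w ∧ T.rel w b) ⟨b, h.1, T.refl b⟩
  obtain ⟨haz, hzb⟩ := hz.prop
  have haz_llp : T.llp.rel a z := ⟨haz, fun u _ huv hau hzv =>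
    (hz.le_of_le ⟨le_inf hau haz, T.trans (T.restrict huv hzv) hzb⟩ inf_le_right).trans
      inf_le_left⟩
  rwa [le_antisymm (h.2 haz_llp le_rfl (T.le_of_rel hzb)) haz] at hzb

theorem CoTransferSystem.llp_rlp [WellFoundedGT L] (C : CoTransferSystem G L) :
    C.rlp.llp = C := by
  refine le_antisymm (fun a b h => ?_) fun a b h =>
    ⟨C.le_of_rel h, fun _ _ hxy hax hby => hxy.2 h hax hby⟩
  obtain ⟨z, hz⟩ :=
    exists_maximal_of_wellFoundedGT (fun w => C.rel a w ∧ w ≤ b) ⟨a, C.refl a, h.1⟩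
  obtain ⟨haz, hzb⟩ := hz.prop
  have hzb_rlp : C.rlp.rel z b := ⟨hzb, fun _ v huv huz hvb =>
    le_sup_left.trans
      (hz.le_of_ge ⟨C.trans haz (C.corestrict huv huz), sup_le hvb hzb⟩ le_sup_right)⟩
  rwa [le_antisymm hzb (h.2 hzb_rlp (C.le_of_rel haz) le_rfl)] at haz

def rlpOrderIso [WellFoundedLT L] [WellFoundedGT L] :
    CoTransferSystem G L ≃o (TransferSystem G L)ᵒᵈ :=
  Equiv.toOrderIso
    { toFun := fun C => OrderDual.toDual C.rlp
      invFun := fun T => (OrderDual.ofDual T).llp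
      left_inv := CoTransferSystem.llp_rlp
      right_inv := TransferSystem.rlp_llp }
    (fun _ _ h => CoTransferSystem.rlp_antitone h) fun _ _ h => TransferSystem.llp_antitone h

end Lifting

theorem rlp_orderIso_general {G L : Type*} [Group G] [Lattice L] [Finite L]
    [MulAction G L] [CovariantClass G L (· • ·) (· ≤ ·)] :
    ∃ F : CoTransferSystem G L → TransferSystem G L,
      (∀ C : CoTransferSystem G L, (F C).rel = rlpRel C) ∧
      Function.Bijective F ∧
      ∀ C D : CoTransferSystem G L, C ≤ D ↔ F D ≤ F C :=
  ⟨CoTransferSystem.rlp, fun _ => rfl, OrderDual.ofDual.bijective.comp rlpOrderIso.bijective,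
    fun _ _ => rlpOrderIso.le_iff_le.symm⟩

/-- For every cotransfer system `C` on `L`, `C^⊠` is a transfer system,
and `C ↦ C^⊠` is an order-reversing bijection `coTr(L) ≅ Tr(L)ᵒᵖ`. -/
theorem rlp_orderIso {G L : Type*} [Group G] [Finite G] [Lattice L] [Finite L]
    [MulAction G L] [CovariantClass G L (· • ·) (· ≤ ·)] :
    ∃ F : CoTransferSystem G L → TransferSystem G L,
      (∀ C : CoTransferSystem G L, (F C).rel = rlpRel C) ∧
      Function.Bijective F ∧
      ∀ C D : CoTransferSystem G L, C ≤ D ↔ F D ≤ F C :=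
  rlp_orderIso_general
end

section
/- Let L be a finite G-lattice and let x, y ∈ L with x ≤ y. Then the cotransfer system ⌈x → y⌉ equals the reflexive-transitive closure of the binary relation {(z, (g·y) ∨ z) : g ∈ G, z ∈ L, g·x ≤ z}. -/
/-!
Every translate `g • x → g • y` lies in `⌈x → y⌉`, and corestricting it along `g • x ≤ z` gives
`z → g • y ⊔ z`; so the closure is contained in `⌈x → y⌉`. Conversely the one-step relation is
carried to itself by each `g • ·` (an order automorphism, hence a lattice automorphism) and by
each `· ⊔ u`, so its reflexive-transitive closure is already a cotransfer system, and it
contains `x → y ⊔ x = y`.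
-/

namespace CoTransferSystem

variable {G L : Type*} [Group G] [Lattice L] [MulAction G L]

instance (C : CoTransferSystem G L) : Std.Refl C.rel := ⟨C.refl⟩

instance (C : CoTransferSystem G L) : IsTrans L C.rel := ⟨fun _ _ _ => C.trans⟩

def smulOrderIso [CovariantClass G L (· • ·) (· ≤ ·)] (g : G) : L ≃o L where
  toEquiv := MulAction.toPerm g
  map_rel_iff' {a b} :=
    ⟨fun h => by simpa using TransferSystem.smul_mono' g⁻¹ h, TransferSystem.smul_mono' g⟩

variable (G) in
def genStep (x y : L) (z w : L) : Prop := ∃ g : G, g • x ≤ z ∧ w = g • y ⊔ z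

theorem genStep_self {x y : L} (hxy : x ≤ y) : genStep G x y x y :=
  ⟨1, by rw [one_smul], by rw [one_smul, sup_eq_left.mpr hxy]⟩

theorem genStep.le {x y z w : L} (h : genStep G x y z w) : z ≤ w := by
  obtain ⟨g, -, rfl⟩ := h
  exact le_sup_right

theorem genStep.smul [CovariantClass G L (· • ·) (· ≤ ·)] {x y z w : L}
    (h : genStep G x y z w) (g : G) : genStep G x y (g • z) (g • w) := by
  obtain ⟨k, hk, rfl⟩ := h
  refine ⟨g * k, ?_, ?_⟩
  · rw [mul_smul]
    exact TransferSystem.smul_mono' g hk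
  · rw [mul_smul]
    exact (smulOrderIso g).map_sup _ _

theorem genStep.sup_right {x y z w : L} (h : genStep G x y z w) (u : L) :
    genStep G x y (z ⊔ u) (w ⊔ u) := by
  obtain ⟨g, hg, rfl⟩ := h
  exact ⟨g, hg.trans le_sup_left, sup_assoc _ _ _⟩

def genStepClosure [CovariantClass G L (· • ·) (· ≤ ·)] (x y : L) :
    CoTransferSystem G L where
  rel := Relation.ReflTransGen (genStep G x y)
  refl _ := .refl
  trans := .trans
  le_of_rel h := Relation.reflTransGen_le_of_le (r := (· ≤ ·)) (fun _ _ hs => hs.le) _ _ h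
  smul_rel g _ _ h := Relation.ReflTransGen.lift (g • ·) (fun _ _ hs => hs.smul g) _ _ h
  corestrict {a b u} h hau := by
    simpa only [Function.onFun, sup_eq_right.mpr hau] using
      Relation.ReflTransGen.lift (· ⊔ u) (fun _ _ hs => hs.sup_right u) _ _ h

theorem genStep_le_rel {C : CoTransferSystem G L} {x y : L} (hC : C.rel x y) :
    genStep G x y ≤ C.rel := by
  rintro z _ ⟨g, hg, rfl⟩
  exact C.corestrict (C.smul_rel g hC) hg

theorem gen_rel_self [CovariantClass G L (· • ·) (· ≤ ·)] {x y : L} (hxy : x ≤ y) :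
    (gen (G := G) x y).rel x y :=
  ⟨hxy, fun _ hC => hC⟩

end CoTransferSystem

theorem cotsGen_eq_reflTransGen_general {G L : Type*} [Group G] [Lattice L]
    [MulAction G L] [CovariantClass G L (· • ·) (· ≤ ·)]
    (x y : L) (hxy : x ≤ y) :
    (CoTransferSystem.gen (G := G) x y).rel =
      Relation.ReflTransGen (fun z w => ∃ g : G, g • x ≤ z ∧ w = (g • y) ⊔ z) :=
  le_antisymm
    (fun _ _ h => h.2 (CoTransferSystem.genStepClosure x y)
      (.single (CoTransferSystem.genStep_self hxy)))
    (Relation.reflTransGen_le_of_le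
      (CoTransferSystem.genStep_le_rel (CoTransferSystem.gen_rel_self hxy)))

/-- For `x ≤ y`, the cotransfer system `⌈x → y⌉` is the
reflexive-transitive closure of `{(z, (g • y) ⊔ z) : g ∈ G, g • x ≤ z}`. -/
theorem cotsGen_eq_reflTransGen {G L : Type*} [Group G] [Finite G] [Lattice L] [Finite L]
    [MulAction G L] [CovariantClass G L (· • ·) (· ≤ ·)]
    (x y : L) (hxy : x ≤ y) :
    (CoTransferSystem.gen (G := G) x y).rel =
      Relation.ReflTransGen (fun z w => ∃ g : G, g • x ≤ z ∧ w = (g • y) ⊔ z) :=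
  cotsGen_eq_reflTransGen_general x y hxy
end

section
/- For every integer n ≥ 1, the maximum of (n − i)(n + 3i) over integers i with 0 ≤ i ≤ n − 1 equals ⌊4n²/3⌋. -/
/-! The identity `3 (n - i)(n + 3i) + (n - 3i)² = 4n²` bounds every term by `4n²/3`, with
equality up to the floor exactly when `|n - 3i| ≤ 1`, i.e. for `i` the integer nearest to `n/3`. -/

lemma three_mul_sub_mul_add_add_sq (n i : ℤ) :
    3 * ((n - i) * (n + 3 * i)) + (n - 3 * i) ^ 2 = 4 * n ^ 2 := by
  ring

lemma sub_mul_add_le_four_mul_sq_div_three {n i : ℕ} (hi : i ≤ n) :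
    (n - i) * (n + 3 * i) ≤ 4 * n ^ 2 / 3 := by
  rw [Nat.le_div_iff_mul_le three_pos]
  zify [hi]
  nlinarith [three_mul_sub_mul_add_add_sq n i, sq_nonneg ((n : ℤ) - 3 * i)]

lemma four_mul_sq_div_three_le_sub_mul_add {n i : ℕ} (hi : i ≤ n)
    (hclose : |(n : ℤ) - 3 * i| ≤ 1) :
    4 * n ^ 2 / 3 ≤ (n - i) * (n + 3 * i) := by
  rw [← Nat.lt_succ_iff, Nat.div_lt_iff_lt_mul three_pos]
  have hsq : ((n : ℤ) - 3 * i) ^ 2 ≤ 1 :=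
    (sq_le_one_iff_abs_le_one _).mpr hclose
  zify [hi]
  nlinarith [three_mul_sub_mul_add_add_sq n i]

lemma abs_sub_three_mul_add_one_div_three_le_one (n : ℕ) :
    |(n : ℤ) - 3 * ((n + 1) / 3 : ℕ)| ≤ 1 := by
  rw [abs_le]
  omega

theorem max_eq_floor_general (n : ℕ) :
    (Finset.range n).sup (fun i => (n - i) * (n + 3 * i)) = 4 * n ^ 2 / 3 := by
  refine le_antisymm (Finset.sup_le fun i hi ↦
    sub_mul_add_le_four_mul_sq_div_three (Finset.mem_range.mp hi).le) ?_
  rcases Nat.eq_zero_or_pos n with rfl | hn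
  · simp
  have hmem : (n + 1) / 3 ∈ Finset.range n := Finset.mem_range.mpr (by omega)
  exact (four_mul_sq_div_three_le_sub_mul_add (Finset.mem_range.mp hmem).le
    (abs_sub_three_mul_add_one_div_three_le_one n)).trans
    (Finset.le_sup (f := fun i => (n - i) * (n + 3 * i)) hmem)

/-- For every `n ≥ 1`, the maximum of `(n - i)(n + 3i)` over
`0 ≤ i ≤ n - 1` equals `⌊4n²/3⌋`. -/
theorem max_eq_floor (n : ℕ) (hn : 1 ≤ n) :
    (Finset.range n).sup (fun i => (n - i) * (n + 3 * i)) = 4 * n ^ 2 / 3 :=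
  max_eq_floor_general n
end
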